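/- If y solves x y² y'' + x y' − y = 0 with x y' − y ≠ 0, then setting r = y/x and α = 1/(x y' − y), the function α, viewed as a function of r along the solution, satisfies r² dα/dr − α² = 0. -/

import Mathlib

/-! With `D = x y' − y`, along any curve one has `dr/dx = D / x²` and, since `dD/dx = x y''`,
`dα/dx = −x y'' / D²`. Hence
`r² dα/dx − α² dr/dx = −(x y² y'' + x y' − y) / (x² D²)`, which vanishes exactly on
solutions of the ODE. -/

section

variable {𝕜 : Type*} [NontriviallyNormedField 𝕜]

theorem hasDerivAt_div_id {f : 𝕜 → 𝕜} {f' x : 𝕜} (hf : HasDerivAt f f' x) (hx : x ≠ 0) :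
    HasDerivAt (fun t => f t / t) ((x * f' - f x) / x ^ 2) x :=
  (hf.fun_div (hasDerivAt_id' x) hx).congr_deriv (by ring)

theorem hasDerivAt_mul_deriv_sub {y y' : 𝕜 → 𝕜} {y'' x : 𝕜}
    (hy : HasDerivAt y (y' x) x) (hy' : HasDerivAt y' y'' x) :
    HasDerivAt (fun t => t * y' t - y t) (x * y'') x :=
  (((hasDerivAt_id' x).fun_mul hy').fun_sub hy).congr_deriv (by ring)

theorem hasDerivAt_one_div_mul_deriv_sub {y y' : 𝕜 → 𝕜} {y'' x : 𝕜}
    (hy : HasDerivAt y (y' x) x) (hy' : HasDerivAt y' y'' x) (hD : x * y' x - y x ≠ 0) :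
    HasDerivAt (fun t => 1 / (t * y' t - y t)) (-(x * y'') / (x * y' x - y x) ^ 2) x :=
  ((hasDerivAt_const x (1 : 𝕜)).fun_div (hasDerivAt_mul_deriv_sub hy hy') hD).congr_deriv
    (by ring)

end

/-- If `y` solves `x y² y'' + x y' − y = 0` with `x y' − y ≠ 0` (and `x ≠ 0`),
then, setting `r = y/x` and `α = 1/(x y' − y)`, the function `α` viewed as a function
of `r` along the solution satisfies `r² dα/dr − α² = 0`; via the chain rule this reads
`r² · dα/dx = α² · dr/dx`. -/
theorem stmt_8 (y y' y'' : ℝ → ℝ)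
    (hy : ∀ t, HasDerivAt y (y' t) t)
    (hy' : ∀ t, HasDerivAt y' (y'' t) t)
    (x : ℝ) (hx : x ≠ 0)
    (hode : x * (y x) ^ 2 * y'' x + x * y' x - y x = 0)
    (hnz : x * y' x - y x ≠ 0) :
    (y x / x) ^ 2 * deriv (fun t : ℝ => 1 / (t * y' t - y t)) x
      = (1 / (x * y' x - y x)) ^ 2 * deriv (fun t : ℝ => y t / t) x := by
  rw [(hasDerivAt_one_div_mul_deriv_sub (hy x) (hy' x) hnz).deriv,
    (hasDerivAt_div_id (hy x) hx).deriv]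
  field_simp
  linear_combination (-1) * hode
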